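/- Let i, j ∈ {1,…,R} and suppose that α(m,i) · γ(m,j) = 0 and α(m,j) · γ(m,i) = 0 for all m ∈ {1,…,M} (i.e. no species participates non-catalytically in both reaction steps). Then [g_i, g_j](x) = 0 for every x ∈ ℝ^M. (Lemma 3, case 1.) -/
import Mathlib


/-- The vector field of the `r`-th reaction step: `g_r(x) = x^{α(·,r)} • γ(·,r)`. -/
noncomputable def reactionVF (M R : ℕ) (α : Fin M → Fin R → ℕ)
    (γ : Matrix (Fin M) (Fin R) ℝ) (r : Fin R) (x : Fin M → ℝ) : Fin M → ℝ :=
  (∏ m, x m ^ α m r) • fun m => γ m r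

/-- The Lie bracket of two vector fields on `ℝ^M`:
`[φ,ψ](x) = Dψ(x)(φ(x)) − Dφ(x)(ψ(x))`. -/
noncomputable def lieBracket {M : ℕ} (φ ψ : (Fin M → ℝ) → (Fin M → ℝ))
    (x : Fin M → ℝ) : Fin M → ℝ :=
  fderiv ℝ ψ x (φ x) - fderiv ℝ φ x (ψ x)

lemma hasFDerivAt_reactionVF (M R : ℕ) (α : Fin M → Fin R → ℕ)
    (γ : Matrix (Fin M) (Fin R) ℝ) (r : Fin R) (x : Fin M → ℝ) :
    HasFDerivAt (reactionVF M R α γ r)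
      ((∑ m, (∏ k ∈ Finset.univ.erase m, x k ^ α k r) •
          (((α m r : ℝ) * x m ^ (α m r - 1)) •
            (ContinuousLinearMap.proj m : (Fin M → ℝ) →L[ℝ] ℝ))).smulRight
        (fun m => γ m r)) x := by
  have h : ∀ m ∈ Finset.univ, HasFDerivAt (fun y : Fin M → ℝ => y m ^ α m r)
      (((α m r : ℝ) * x m ^ (α m r - 1)) •
        (ContinuousLinearMap.proj m : (Fin M → ℝ) →L[ℝ] ℝ)) x := by
    intro m _
    exact (hasDerivAt_pow (α m r) (x m)).comp_hasFDerivAt x (hasFDerivAt_apply m x)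
  exact (HasFDerivAt.finset_prod h).smul_const _

/-- Lemma 3, case 1: if no species participates non-catalytically in both
the `i`-th and `j`-th reaction steps, then `[g_i, g_j] = 0` everywhere. -/
theorem lieBracket_reactionVF_eq_zero (M R : ℕ) (α : Fin M → Fin R → ℕ)
    (γ : Matrix (Fin M) (Fin R) ℝ) (i j : Fin R)
    (hij : ∀ m, (α m i : ℝ) * γ m j = 0)
    (hji : ∀ m, (α m j : ℝ) * γ m i = 0) :
    ∀ x : Fin M → ℝ, lieBracket (reactionVF M R α γ i) (reactionVF M R α γ j) x = 0 := by
  intro x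
  have key : ∀ (a b : Fin R), (∀ m, (α m a : ℝ) * γ m b = 0) →
      fderiv ℝ (reactionVF M R α γ a) x (reactionVF M R α γ b x) = 0 := by
    intro a b hab
    rw [(hasFDerivAt_reactionVF M R α γ a x).fderiv]
    have : (∑ m, (∏ k ∈ Finset.univ.erase m, x k ^ α k a) •
          (((α m a : ℝ) * x m ^ (α m a - 1)) •
            (ContinuousLinearMap.proj m : (Fin M → ℝ) →L[ℝ] ℝ)))
          (reactionVF M R α γ b x) = 0 := by
      rw [ContinuousLinearMap.sum_apply]
      apply Finset.sum_eq_zero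
      intro m _
      have hmb : (reactionVF M R α γ b x) m = (∏ k, x k ^ α k b) * γ m b := rfl
      simp only [ContinuousLinearMap.smul_apply, ContinuousLinearMap.proj_apply, hmb,
        smul_eq_mul]
      have := hab m
      ring_nf
      rcases mul_eq_zero.mp this with h | h <;> simp [h]
    simp [ContinuousLinearMap.smulRight_apply, this]
  unfold lieBracket
  rw [key j i hji, key i j hij, sub_zero]
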